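/- arXiv:1201.4764 — 7 statements merged into one kernel-verified Lean document; each statement's English description precedes it below -/
import Mathlib

section
/- Let X_1,...,X_n be independent non-negative real-valued random variables with E[max_i X_i] < ∞, and let T = E[max_i X_i]/2. Define the stopping rule τ that stops at the first index i with X_i ≥ T (if any). Then E[X_τ] ≥ T = (1/2)·E[max_i X_i], where X_τ = 0 if no index is accepted. -/
open MeasureTheory ProbabilityTheory Finset

/-!
With `p` the probability that some `X i ≥ T`, the payoff of the threshold rule is
`T · 1{some X i ≥ T} + ∑ i, (X i - T)⁺ · 1{X j < T for all j < i}`. Since `X i` is independent of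
the earlier coordinates, each summand has expectation `E[(X i - T)⁺] · P(X j < T for all j < i)`,
and that probability is at least `1 - p`. As `∑ i, (X i - T)⁺ ≥ max_i X i - T`, the expected payoff
is at least `T p + (1 - p) (E[max_i X i] - T)`, which is `T` when `T = E[max_i X i] / 2`.
-/

theorem sup'_sub_le_sum_posPart {ι : Type*} [Fintype ι] [Nonempty ι] (T : ℝ) (x : ι → ℝ) :
    univ.sup' univ_nonempty x - T ≤ ∑ i, (x i - T)⁺ := by
  obtain ⟨i₀, -, hi₀⟩ := exists_mem_eq_sup' univ_nonempty x
  calc univ.sup' univ_nonempty x - T = x i₀ - T := by rw [hi₀]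
    _ ≤ (x i₀ - T)⁺ := le_posPart _
    _ ≤ ∑ i, (x i - T)⁺ :=
      single_le_sum (f := fun i => (x i - T)⁺) (fun i _ => posPart_nonneg _) (mem_univ i₀)

section Pointwise

variable {ι : Type*} [Fintype ι] [LinearOrder ι]

noncomputable def thresholdPayoff (T : ℝ) (x : ι → ℝ) : ℝ :=
  if h : (univ.filter fun i => T ≤ x i).Nonempty then x ((univ.filter fun i => T ≤ x i).min' h)
  else 0

theorem thresholdPayoff_eq_indicator_add_sum (T : ℝ) (x : ι → ℝ) :
    thresholdPayoff T x =
      {x | ∃ i, T ≤ x i}.indicator (fun _ => T) x +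
        ∑ i, (x i - T)⁺ * {x | ∀ j < i, x j < T}.indicator 1 x := by
  unfold thresholdPayoff
  split_ifs with h
  · set i₀ := (univ.filter fun i => T ≤ x i).min' h
    have hi₀ : T ≤ x i₀ := (mem_filter.mp (min'_mem _ h)).2
    have hbefore : ∀ j < i₀, x j < T := fun j hj =>
      not_le.mp fun hT => (min'_le _ j (mem_filter.mpr ⟨mem_univ j, hT⟩)).not_gt hj
    have hothers : ∀ i ≠ i₀, (x i - T)⁺ * {x | ∀ j < i, x j < T}.indicator 1 x = 0 := by
      intro i hi
      rcases hi.lt_or_gt with hlt | hgt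
      · simp [posPart_eq_zero.mpr (sub_nonpos.mpr (hbefore i hlt).le)]
      · have : x ∉ {x | ∀ j < i, x j < T} := fun hx => (hx i₀ hgt).not_ge hi₀
        simp [Set.indicator_of_notMem this]
    rw [sum_eq_single i₀ (fun i _ => hothers i) (by simp),
      Set.indicator_of_mem (show x ∈ {x | ∃ i, T ≤ x i} from ⟨i₀, hi₀⟩),
      Set.indicator_of_mem (show x ∈ {x | ∀ j < i₀, x j < T} from hbefore), Pi.one_apply, mul_one,
      posPart_eq_self.mpr (sub_nonneg.mpr hi₀)]
    ring
  · have hbelow : ∀ i, x i < T := fun i =>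
      not_le.mp fun hT => h ⟨i, mem_filter.mpr ⟨mem_univ i, hT⟩⟩
    rw [Set.indicator_of_notMem (by simpa using hbelow)]
    simp [posPart_eq_zero.mpr (sub_nonpos.mpr (hbelow _).le)]

end Pointwise

section Probability

variable {ι Ω : Type*} [Fintype ι] [LinearOrder ι] [MeasurableSpace Ω] {μ : Measure Ω}
  {X : ι → Ω → ℝ}

theorem ProbabilityTheory.iIndepFun.indepFun_posPart_sub_indicator_forall_lt
    (hindep : iIndepFun X μ) (hmeas : ∀ i, Measurable (X i)) (T : ℝ) (i : ι) :
    IndepFun (fun ω => (X i ω - T)⁺) ({ω | ∀ j < i, X j ω < T}.indicator (1 : Ω → ℝ)) μ := by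
  set S : Finset ι := univ.filter (· < i)
  have hindep_S := hindep.indepFun_finset {i} S (by simp [S]) hmeas
  have hφ : Measurable fun v : ({i} : Finset ι) → ℝ => (v ⟨i, mem_singleton_self i⟩ - T)⁺ := by
    fun_prop
  have hψ : Measurable ({v : S → ℝ | ∀ j, v j < T}.indicator (1 : (S → ℝ) → ℝ)) :=
    measurable_const.indicator (by measurability)
  have hset : {ω | ∀ j < i, X j ω < T} = (fun ω (j : S) => X j ω) ⁻¹' {v | ∀ j, v j < T} := by
    ext ω
    simp [S]
  rw [hset]
  exact hindep_S.comp hφ hψ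

theorem integral_thresholdPayoff (hindep : iIndepFun X μ) (hmeas : ∀ i, Measurable (X i))
    (T : ℝ) (hint : ∀ i, Integrable (fun ω => (X i ω - T)⁺) μ) :
    ∫ ω, thresholdPayoff T (X · ω) ∂μ =
      T * μ.real {ω | ∃ i, T ≤ X i ω} +
        ∑ i, (∫ ω, (X i ω - T)⁺ ∂μ) * μ.real {ω | ∀ j < i, X j ω < T} := by
  have := hindep.isProbabilityMeasure
  have hA : MeasurableSet {ω | ∃ i, T ≤ X i ω} := by measurability
  have hB (i : ι) : MeasurableSet {ω | ∀ j < i, X j ω < T} := by measurability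
  have hindep_i := hindep.indepFun_posPart_sub_indicator_forall_lt hmeas T
  have hind_int (i : ι) : Integrable ({ω | ∀ j < i, X j ω < T}.indicator (1 : Ω → ℝ)) μ :=
    (integrable_const 1).indicator (hB i)
  have hterm_int (i : ι) : Integrable
      (fun ω => (X i ω - T)⁺ * {ω | ∀ j < i, X j ω < T}.indicator 1 ω) μ :=
    (hindep_i i).integrable_mul (hint i) (hind_int i)
  calc ∫ ω, thresholdPayoff T (X · ω) ∂μ
      = ∫ ω, ({ω | ∃ i, T ≤ X i ω}.indicator (fun _ => T) ω +
          ∑ i, (X i ω - T)⁺ * {ω | ∀ j < i, X j ω < T}.indicator 1 ω) ∂μ :=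
        integral_congr_ae (ae_of_all _ fun ω => thresholdPayoff_eq_indicator_add_sum T (X · ω))
    _ = T * μ.real {ω | ∃ i, T ≤ X i ω} +
          ∑ i, (∫ ω, (X i ω - T)⁺ ∂μ) * μ.real {ω | ∀ j < i, X j ω < T} := by
        rw [integral_add ((integrable_const T).indicator hA)
            (integrable_finsetSum _ fun i _ => hterm_int i),
          integral_indicator_const T hA, smul_eq_mul, mul_comm,
          integral_finsetSum _ fun i _ => hterm_int i]
        congr 1
        refine sum_congr rfl fun i _ => ?_
        rw [(hindep_i i).integral_fun_mul_eq_mul_integral (hint i).aestronglyMeasurable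
          (hind_int i).aestronglyMeasurable, integral_indicator_one (hB i)]

theorem le_integral_thresholdPayoff [Nonempty ι] (hindep : iIndepFun X μ)
    (hmeas : ∀ i, Measurable (X i)) (T : ℝ)
    (hint : Integrable (fun ω => univ.sup' univ_nonempty (X · ω)) μ) :
    T * μ.real {ω | ∃ i, T ≤ X i ω} +
        (1 - μ.real {ω | ∃ i, T ≤ X i ω}) * (∫ ω, univ.sup' univ_nonempty (X · ω) ∂μ - T) ≤
      ∫ ω, thresholdPayoff T (X · ω) ∂μ := by
  have := hindep.isProbabilityMeasure
  have hA : MeasurableSet {ω | ∃ i, T ≤ X i ω} := by measurability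
  have hg_int (i : ι) : Integrable (fun ω => (X i ω - T)⁺) μ := by
    have hg_meas : Measurable fun ω => (X i ω - T)⁺ := by fun_prop
    refine (hint.sub (integrable_const T)).pos_part.mono' hg_meas.aestronglyMeasurable
      (ae_of_all _ fun ω => ?_)
    rw [Real.norm_of_nonneg (posPart_nonneg _)]
    exact posPart_mono (sub_le_sub_right (le_sup' (X · ω) (mem_univ i)) T)
  have hsum : ∫ ω, univ.sup' univ_nonempty (X · ω) ∂μ - T ≤ ∑ i, ∫ ω, (X i ω - T)⁺ ∂μ := by
    calc ∫ ω, univ.sup' univ_nonempty (X · ω) ∂μ - T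
        = ∫ ω, (univ.sup' univ_nonempty (X · ω) - T) ∂μ := by
          rw [integral_sub hint (integrable_const T), integral_const, probReal_univ, one_smul]
      _ ≤ ∫ ω, ∑ i, (X i ω - T)⁺ ∂μ :=
          integral_mono (hint.sub (integrable_const T))
            (integrable_finsetSum _ fun i _ => hg_int i) fun ω => sup'_sub_le_sum_posPart T (X · ω)
      _ = ∑ i, ∫ ω, (X i ω - T)⁺ ∂μ := integral_finsetSum _ fun i _ => hg_int i
  rw [integral_thresholdPayoff hindep hmeas T hg_int, ← probReal_compl_eq_one_sub hA]
  gcongr T * _ + ?_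
  calc μ.real {ω | ∃ i, T ≤ X i ω}ᶜ * (∫ ω, univ.sup' univ_nonempty (X · ω) ∂μ - T)
      ≤ μ.real {ω | ∃ i, T ≤ X i ω}ᶜ * ∑ i, ∫ ω, (X i ω - T)⁺ ∂μ := by gcongr
    _ = ∑ i, (∫ ω, (X i ω - T)⁺ ∂μ) * μ.real {ω | ∃ i, T ≤ X i ω}ᶜ := by
        rw [mul_sum]; simp_rw [mul_comm]
    _ ≤ ∑ i, (∫ ω, (X i ω - T)⁺ ∂μ) * μ.real {ω | ∀ j < i, X j ω < T} := by
        gcongr with i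
        · finiteness
        · intro ω hω j _
          exact not_le.mp fun h => hω ⟨j, h⟩

end Probability

theorem stmt0_general {Ω : Type*} [MeasurableSpace Ω] (μ : Measure Ω)
    (n : ℕ) [NeZero n] (X : Fin n → Ω → ℝ)
    (hmeas : ∀ i, Measurable (X i))
    (hindep : iIndepFun X μ)
    (hint : Integrable (fun ω => Finset.univ.sup' Finset.univ_nonempty (fun i => X i ω)) μ)
    (T : ℝ)
    (hT : T = (∫ ω, Finset.univ.sup' Finset.univ_nonempty (fun i => X i ω) ∂μ) / 2)
    (payoff : Ω → ℝ)
    (hpayoff : ∀ ω, payoff ω =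
      if h : ((Finset.univ : Finset (Fin n)).filter (fun i => T ≤ X i ω)).Nonempty
      then X (((Finset.univ : Finset (Fin n)).filter (fun i => T ≤ X i ω)).min' h) ω
      else 0) :
    T ≤ ∫ ω, payoff ω ∂μ := by
  have hmean : ∫ ω, univ.sup' univ_nonempty (X · ω) ∂μ = 2 * T := by rw [hT]; ring
  rw [show payoff = fun ω => thresholdPayoff T (X · ω) from funext hpayoff]
  calc T = T * μ.real {ω | ∃ i, T ≤ X i ω} +
        (1 - μ.real {ω | ∃ i, T ≤ X i ω}) * (∫ ω, univ.sup' univ_nonempty (X · ω) ∂μ - T) := by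
        rw [hmean]
        ring
    _ ≤ _ := le_integral_thresholdPayoff hindep hmeas T hint

/-- The prophet inequality via the median-of-expectation threshold rule:
with `T = E[max_i X_i]/2`, accepting the first `X_i ≥ T` yields expected payoff at least `T`. -/
theorem stmt0 {Ω : Type*} [MeasurableSpace Ω] (μ : Measure Ω) [IsProbabilityMeasure μ]
    (n : ℕ) [NeZero n] (X : Fin n → Ω → ℝ)
    (hmeas : ∀ i, Measurable (X i))
    (hnonneg : ∀ i ω, 0 ≤ X i ω)
    (hindep : iIndepFun X μ)
    (hint : Integrable (fun ω => Finset.univ.sup' Finset.univ_nonempty (fun i => X i ω)) μ)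
    (T : ℝ)
    (hT : T = (∫ ω, Finset.univ.sup' Finset.univ_nonempty (fun i => X i ω) ∂μ) / 2)
    (payoff : Ω → ℝ)
    (hpayoff : ∀ ω, payoff ω =
      if h : ((Finset.univ : Finset (Fin n)).filter (fun i => T ≤ X i ω)).Nonempty
      then X (((Finset.univ : Finset (Fin n)).filter (fun i => T ≤ X i ω)).min' h) ω
      else 0) :
    T ≤ ∫ ω, payoff ω ∂μ :=
  stmt0_general μ n X hmeas hindep hint T hT payoff hpayoff
end

section
/- Let X_1,...,X_n be independent non-negative random variables, T a real number, and p = Pr[max_i X_i ≥ T]. Let τ be the first index i with X_i ≥ T. Then for every x > T, Pr[X_τ > x] ≥ (1-p)·Σ_{i=1}^n Pr[X_i > x]. -/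
open MeasureTheory ProbabilityTheory Set

/-!
Let `E i` be the event that `X i > x` while `X j < T` for every `j < i`. Since `x ≥ T`, on `E i`
the rule stops at `i` and pays more than `x`, and the `E i` are disjoint. By independence
`Pr[E i] = Pr[X i > x] * Pr[X j < T for all j < i]`, and the second factor is at least
`Pr[X j < T for all j] = 1 - p`.
-/

theorem ProbabilityTheory.iIndepFun.measure_preimage_inter_biInter_preimage_eq_mul
    {Ω ι : Type*} {β : ι → Type*} [MeasurableSpace Ω] [DecidableEq ι]
    {m : ∀ i, MeasurableSpace (β i)} {μ : Measure Ω} {X : ∀ i, Ω → β i} (h : iIndepFun X μ)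
    {s : Finset ι} {i : ι} (hi : i ∉ s) {A : Set (β i)} (hA : MeasurableSet A)
    {B : ∀ j, Set (β j)} (hB : ∀ j ∈ s, MeasurableSet (B j)) :
    μ (X i ⁻¹' A ∩ ⋂ j ∈ s, X j ⁻¹' B j) = μ (X i ⁻¹' A) * μ (⋂ j ∈ s, X j ⁻¹' B j) := by
  have hBs : ∀ j ∈ s, Function.update B i A j = B j := fun j hj =>
    Function.update_of_ne (ne_of_mem_of_not_mem hj hi) _ _
  have hmeas : ∀ j ∈ insert i s, MeasurableSet (Function.update B i A j) := by
    intro j hj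
    rcases Finset.mem_insert.mp hj with rfl | hj
    · simpa using hA
    · simpa [hBs j hj] using hB j hj
  have hprod := h.measure_inter_preimage_eq_mul _ hmeas
  rw [Finset.set_biInter_insert, Finset.prod_insert hi, Function.update_self] at hprod
  rw [Set.iInter₂_congr fun j hj => by rw [hBs j hj],
    Finset.prod_congr rfl fun j hj => by rw [hBs j hj]] at hprod
  rw [hprod, h.measure_inter_preimage_eq_mul _ hB]

section FirstExceedance

variable {Ω ι : Type*}

def allBelow (X : ι → Ω → ℝ) (T : ℝ) (s : Finset ι) : Set Ω := ⋂ j ∈ s, X j ⁻¹' Iio T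

def firstExceedance [Preorder ι] [LocallyFiniteOrderBot ι] (X : ι → Ω → ℝ) (T x : ℝ) (i : ι) :
    Set Ω :=
  X i ⁻¹' Ioi x ∩ allBelow X T (Finset.Iio i)

variable {X : ι → Ω → ℝ} {T x : ℝ}

theorem setOf_le_sup'_eq_compl_allBelow [Fintype ι] (hne : Finset.univ.Nonempty) :
    {ω | T ≤ Finset.univ.sup' hne (fun i => X i ω)} = (allBelow X T (Finset.univ : Finset ι))ᶜ := by
  ext ω
  simp [allBelow]

theorem measurableSet_allBelow [MeasurableSpace Ω] (hX : ∀ i, Measurable (X i))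
    (s : Finset ι) : MeasurableSet (allBelow X T s) :=
  s.measurableSet_biInter fun j _ => hX j measurableSet_Iio

variable [LinearOrder ι] [LocallyFiniteOrderBot ι]

theorem measurableSet_firstExceedance [MeasurableSpace Ω] (hX : ∀ i, Measurable (X i))
    (i : ι) : MeasurableSet (firstExceedance X T x i) :=
  (hX i measurableSet_Ioi).inter (measurableSet_allBelow hX _)

theorem measure_firstExceedance [MeasurableSpace Ω] {μ : Measure Ω} (hind : iIndepFun X μ)
    (i : ι) :
    μ (firstExceedance X T x i) = μ (X i ⁻¹' Ioi x) * μ (allBelow X T (Finset.Iio i)) :=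
  hind.measure_preimage_inter_biInter_preimage_eq_mul (by simp) measurableSet_Ioi
    fun _ _ => measurableSet_Iio

theorem pairwise_disjoint_firstExceedance (hTx : T ≤ x) :
    Pairwise (Function.onFun Disjoint (firstExceedance X T x)) := by
  have key : ∀ i j, i < j → Disjoint (firstExceedance X T x i) (firstExceedance X T x j) := by
    intro i j hij
    refine Set.disjoint_left.mpr fun ω hi hj => ?_
    have hxi : x < X i ω := hi.1
    have hiT : X i ω < T := Set.mem_iInter₂.mp hj.2 i (Finset.mem_Iio.mpr hij)
    linarith
  intro i j hij
  rcases hij.lt_or_gt with h | h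
  · exact key i j h
  · exact (key j i h).symm

theorem min'_filter_eq_of_mem_firstExceedance [Fintype ι] (hTx : T ≤ x) {i : ι} {ω : Ω}
    (hω : ω ∈ firstExceedance X T x i) :
    ∃ h : (Finset.univ.filter fun j => T ≤ X j ω).Nonempty,
      (Finset.univ.filter fun j => T ≤ X j ω).min' h = i := by
  have hi : i ∈ Finset.univ.filter fun j => T ≤ X j ω := by
    simpa using hTx.trans (le_of_lt hω.1)
  refine ⟨⟨i, hi⟩, (Finset.min'_eq_iff _ _ _).mpr ⟨hi, fun j hj => ?_⟩⟩
  by_contra! hji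
  have hjT : X j ω < T := Set.mem_iInter₂.mp hω.2 j (Finset.mem_Iio.mpr hji)
  simp only [Finset.mem_filter, Finset.mem_univ, true_and] at hj
  linarith

theorem measure_allBelow_mul_sum_le [Fintype ι] [MeasurableSpace Ω] {μ : Measure Ω}
    (hind : iIndepFun X μ) (hX : ∀ i, Measurable (X i)) (hTx : T ≤ x) :
    μ (allBelow X T Finset.univ) * ∑ i, μ (X i ⁻¹' Ioi x) ≤ μ (⋃ i, firstExceedance X T x i) := by
  rw [measure_iUnion (pairwise_disjoint_firstExceedance hTx) (measurableSet_firstExceedance hX),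
    tsum_fintype, Finset.mul_sum]
  refine Finset.sum_le_sum fun i _ => ?_
  rw [measure_firstExceedance hind, mul_comm]
  gcongr
  exact Set.biInter_subset_biInter_left (Finset.subset_univ _)

end FirstExceedance

theorem stmt1_general {Ω : Type*} [MeasurableSpace Ω] (μ : Measure Ω) [IsProbabilityMeasure μ]
    (n : ℕ) [NeZero n] (X : Fin n → Ω → ℝ)
    (hmeas : ∀ i, Measurable (X i))
    (hindep : iIndepFun X μ)
    (T : ℝ) (p : ℝ)
    (hp : p = (μ {ω | T ≤ Finset.univ.sup' Finset.univ_nonempty (fun i => X i ω)}).toReal)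
    (payoff : Ω → ℝ)
    (hpayoff : ∀ ω, payoff ω =
      if h : ((Finset.univ : Finset (Fin n)).filter (fun i => T ≤ X i ω)).Nonempty
      then X (((Finset.univ : Finset (Fin n)).filter (fun i => T ≤ X i ω)).min' h) ω
      else 0)
    (x : ℝ) (hx : T < x) :
    (1 - p) * ∑ i, (μ {ω | x < X i ω}).toReal ≤ (μ {ω | x < payoff ω}).toReal := by
  have hTx : T ≤ x := hx.le
  have hp' : 1 - p = (μ (allBelow X T Finset.univ)).toReal := by
    rw [hp, setOf_le_sup'_eq_compl_allBelow, prob_compl_eq_one_sub (measurableSet_allBelow hmeas _),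
      ENNReal.toReal_sub_of_le prob_le_one ENNReal.one_ne_top, ENNReal.toReal_one, sub_sub_cancel]
  have hsub : (⋃ i, firstExceedance X T x i) ⊆ {ω | x < payoff ω} := by
    intro ω hω
    obtain ⟨i, hi⟩ := Set.mem_iUnion.mp hω
    obtain ⟨hne, hmin⟩ := min'_filter_eq_of_mem_firstExceedance hTx hi
    rw [Set.mem_ofPred_eq, hpayoff, dif_pos hne, hmin]
    exact hi.1
  calc (1 - p) * ∑ i, (μ {ω | x < X i ω}).toReal
      = (μ (allBelow X T Finset.univ) * ∑ i, μ (X i ⁻¹' Ioi x)).toReal := by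
        rw [hp', ENNReal.toReal_mul, ENNReal.toReal_sum fun i _ => measure_ne_top μ _]
        rfl
    _ ≤ (μ (⋃ i, firstExceedance X T x i)).toReal :=
        ENNReal.toReal_mono (measure_ne_top μ _) (measure_allBelow_mul_sum_le hindep hmeas hTx)
    _ ≤ (μ {ω | x < payoff ω}).toReal := ENNReal.toReal_mono (measure_ne_top μ _) (measure_mono hsub)

/-- For any `x > T`, the probability that the threshold stopping rule's payoff exceeds `x` is at
least `(1-p)` times the sum of the probabilities `Pr[X_i > x]`, where `p = Pr[max_i X_i ≥ T]`. -/
theorem stmt1 {Ω : Type*} [MeasurableSpace Ω] (μ : Measure Ω) [IsProbabilityMeasure μ]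
    (n : ℕ) [NeZero n] (X : Fin n → Ω → ℝ)
    (hmeas : ∀ i, Measurable (X i))
    (hnonneg : ∀ i ω, 0 ≤ X i ω)
    (hindep : iIndepFun X μ)
    (T : ℝ) (p : ℝ)
    (hp : p = (μ {ω | T ≤ Finset.univ.sup' Finset.univ_nonempty (fun i => X i ω)}).toReal)
    (payoff : Ω → ℝ)
    (hpayoff : ∀ ω, payoff ω =
      if h : ((Finset.univ : Finset (Fin n)).filter (fun i => T ≤ X i ω)).Nonempty
      then X (((Finset.univ : Finset (Fin n)).filter (fun i => T ≤ X i ω)).min' h) ω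
      else 0)
    (x : ℝ) (hx : T < x) :
    (1 - p) * ∑ i, (μ {ω | x < X i ω}).toReal ≤ (μ {ω | x < payoff ω}).toReal :=
  stmt1_general μ n X hmeas hindep T p hp payoff hpayoff x hx
end

section
/- Let M be a matroid and let V, R be two independent sets of equal cardinality. Then there exists a bijection φ: V → R such that for every v ∈ V, the set (R \ {φ(v)}) ∪ {v} is independent. -/
/-!
Call `r ∈ R` an exchange partner of `v` if `insert v (R \ {r})` is independent, and apply Hall's
theorem. If some `v ∈ S ⊆ V` lies outside `closure R`, every `r ∈ R` is a partner of `v`, so the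
partners of `S` are all of `R` and `|S| ≤ |V| = |R|`. Otherwise each `v ∈ S` lies in the closure of
its own partners (for `v ∉ R` these contain its fundamental circuit in `insert v R`, minus `v`),
so the independent set `S` lies in the closure of the partners `N` of `S`, whence `|S| ≤ |N|`.
-/

open Set Function

theorem Set.exists_injective_of_forall_ncard_le_ncard_biUnion {ι β : Type*} {V : Set ι}
    {R : Set β} (hR : R.Finite) (t : ι → Set β) (ht : ∀ v ∈ V, t v ⊆ R)
    (hall : ∀ S ⊆ V, S.ncard ≤ (⋃ v ∈ S, t v).ncard) :
    ∃ f : V → R, Injective f ∧ ∀ v : V, (f v : β) ∈ t v := by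
  classical
  have := hR.fintype
  refine (Fintype.all_card_le_filter_rel_iff_exists_injective
    (fun (v : V) (r : R) => (r : β) ∈ t v)).1 fun A => ?_
  have hunion : (⋃ v ∈ Subtype.val '' (A : Set V), t v) =
      Subtype.val '' ((Finset.univ.filter fun r : R => ∃ a ∈ A, (r : β) ∈ t a : Finset R) :
        Set R) := by
    ext x
    simp only [mem_iUnion, mem_image, Finset.coe_filter, Finset.mem_univ, true_and,
      Finset.mem_coe, exists_prop]
    constructor
    · rintro ⟨_, ⟨v, hvA, rfl⟩, hx⟩
      exact ⟨⟨x, ht v v.2 hx⟩, ⟨v, hvA, hx⟩, rfl⟩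
    · rintro ⟨r, ⟨v, hvA, hr⟩, rfl⟩
      exact ⟨v, ⟨v, hvA, rfl⟩, hr⟩
  have hA := hall (Subtype.val '' (A : Set V)) (image_subset_iff.2 fun v _ => v.2)
  rwa [hunion, ncard_image_of_injective _ Subtype.val_injective,
    ncard_image_of_injective _ Subtype.val_injective, ncard_coe_finset, ncard_coe_finset] at hA

namespace Matroid

variable {α : Type*} {M : Matroid α} {R S T V : Set α} {v : α}

lemma Indep.encard_le_encard_of_subset_closure (hS : M.Indep S) (hST : S ⊆ M.closure T) :
    S.encard ≤ T.encard :=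
  calc S.encard ≤ M.eRk (M.closure T) := hS.encard_le_eRk_of_subset hST
    _ = M.eRk T := M.eRk_closure_eq T
    _ ≤ T.encard := M.eRk_le_encard T

lemma Indep.ncard_le_ncard_of_subset_closure (hS : M.Indep S) (hST : S ⊆ M.closure T)
    (hT : T.Finite) : S.ncard ≤ T.ncard :=
  ENat.toNat_le_toNat (hS.encard_le_encard_of_subset_closure hST) hT.encard_lt_top.ne

def exchangePartners (M : Matroid α) (R : Set α) (v : α) : Set α :=
  {r ∈ R | M.Indep (insert v (R \ {r}))}

lemma exchangePartners_subset (M : Matroid α) (R : Set α) (v : α) :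
    M.exchangePartners R v ⊆ R :=
  sep_subset _ _

lemma Indep.exchangePartners_eq_self (hR : M.Indep R) (hvE : v ∈ M.E)
    (hvR : v ∉ M.closure R) : M.exchangePartners R v = R := by
  refine (M.exchangePartners_subset R v).antisymm fun r hr => ⟨hr, ?_⟩
  have hv : v ∉ R \ {r} := fun h => hvR (M.mem_closure_of_mem' h.1)
  rw [(hR.subset sdiff_subset).insert_indep_iff_of_notMem hv]
  exact ⟨hvE, fun h => hvR (M.closure_subset_closure sdiff_subset h)⟩

lemma Indep.mem_closure_exchangePartners (hR : M.Indep R) (hv : v ∈ M.closure R) :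
    v ∈ M.closure (M.exchangePartners R v) := by
  have hPE : M.exchangePartners R v ⊆ M.E :=
    (M.exchangePartners_subset R v).trans hR.subset_ground
  by_cases hvR : v ∈ R
  · refine M.subset_closure _ hPE ⟨hvR, ?_⟩
    rwa [insert_sdiff_singleton, insert_eq_of_mem hvR]
  have hC := hR.fundCircuit_isCircuit hv hvR
  have hCP : M.fundCircuit v R \ {v} ⊆ M.exchangePartners R v := by
    rintro r ⟨hrC, hrv⟩
    have hrR : r ∈ R := (M.fundCircuit_subset_insert v R hrC).resolve_left hrv
    refine ⟨hrR, ?_⟩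
    rw [insert_sdiff_singleton_comm (Ne.symm hrv)]
    exact (hR.mem_fundCircuit_iff hv hvR).1 hrC
  exact M.closure_subset_closure hCP (hC.mem_closure_sdiff_singleton_of_mem (M.mem_fundCircuit v R))

lemma Indep.ncard_le_ncard_biUnion_exchangePartners (hV : M.Indep V) (hR : M.Indep R)
    (hVfin : V.Finite) (hRfin : R.Finite) (hcard : V.ncard ≤ R.ncard) (hSV : S ⊆ V) :
    S.ncard ≤ (⋃ v ∈ S, M.exchangePartners R v).ncard := by
  have hNR : (⋃ v ∈ S, M.exchangePartners R v) ⊆ R :=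
    iUnion₂_subset fun v _ => M.exchangePartners_subset R v
  by_cases hS : S ⊆ M.closure R
  · refine (hV.subset hSV).ncard_le_ncard_of_subset_closure (fun v hv => ?_) (hRfin.subset hNR)
    exact M.closure_subset_closure (subset_biUnion_of_mem hv)
      (hR.mem_closure_exchangePartners (hS hv))
  · obtain ⟨v, hvS, hvR⟩ := not_subset.1 hS
    have hN : (⋃ v ∈ S, M.exchangePartners R v) = R := by
      refine hNR.antisymm ?_
      calc R = M.exchangePartners R v :=
            (hR.exchangePartners_eq_self (hV.subset_ground (hSV hvS)) hvR).symm
        _ ⊆ _ := subset_biUnion_of_mem (u := M.exchangePartners R) hvS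
    rw [hN]
    exact (ncard_le_ncard hSV hVfin).trans hcard

end Matroid

/-- Matroid exchange bijection: for independent sets `V, R` of equal cardinality there is a
bijection `φ : V → R` such that `(R \ {φ v}) ∪ {v}` is independent for all `v ∈ V`. -/
theorem stmt5 {α : Type*} (M : Matroid α) (V R : Set α)
    (hV : M.Indep V) (hR : M.Indep R)
    (hVfin : V.Finite) (hRfin : R.Finite)
    (hcard : V.ncard = R.ncard) :
    ∃ φ : V → R, Function.Bijective φ ∧
      ∀ v : V, M.Indep ((R \ {(φ v : α)}) ∪ {(v : α)}) := by
  obtain ⟨φ, hφ, hφR⟩ := Set.exists_injective_of_forall_ncard_le_ncard_biUnion hRfin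
    (M.exchangePartners R) (fun v _ => M.exchangePartners_subset R v)
    (fun _ hSV => hV.ncard_le_ncard_biUnion_exchangePartners hR hVfin hRfin hcard.le hSV)
  have := hRfin.to_subtype
  refine ⟨φ, hφ.bijective_of_nat_card_le ?_, fun v => ?_⟩
  · rw [Nat.card_coe_set_eq, Nat.card_coe_set_eq, hcard]
  · rw [union_singleton]
    exact (hφR v).2
end

section
/- Let M be a matroid with weight function w': U → ℝ, and let V, R be independent sets of equal cardinality such that R has maximum weight among all |R|-element independent subsets of V ∪ R. Then there exists a bijection φ: V → R such that for every v ∈ V, (R \ {φ(v)}) ∪ {v} is independent and w'(φ(v)) ≥ w'(v). -/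
/-!
Match each `v ∈ V` with an element of
`T v = {r ∈ R | R - r + v is independent, w'(v) ≤ w'(r)}`. For `v ∉ R` the weight condition
is automatic, since `R - r + v` competes with `R` for maximum weight. So either `T v = R`
(when `v ∉ cl R`), or `T v` contains the fundamental circuit of `v` minus `v` and thus spans
`v`. Hall's condition follows: a set `S ⊆ V` of elements spanned by `⋃_{v ∈ S} T v` is
independent, so it is no larger than that union.
-/

open Set Finset

namespace Matroid

variable {α : Type*} {M : Matroid α}

lemma Indep.encard_le_encard_of_subset_closure_s6 {I X : Set α} (hI : M.Indep I)
    (h : I ⊆ M.closure X) : I.encard ≤ X.encard :=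
  calc I.encard ≤ M.eRk (M.closure X) := hI.encard_le_eRk_of_subset h
    _ = M.eRk X := M.eRk_closure_eq X
    _ ≤ X.encard := M.eRk_le_encard X

lemma Indep.subset_or_mem_closure_of_forall_insert_sdiff_indep {I X : Set α} {e : α}
    (hI : M.Indep I) (he : e ∈ M.E) (heI : e ∉ I)
    (hX : ∀ x ∈ I, M.Indep (insert e (I \ {x})) → x ∈ X) :
    I ⊆ X ∨ e ∈ M.closure X := by
  by_cases hcl : e ∈ M.closure I
  · right
    have hC := hI.fundCircuit_isCircuit hcl heI
    refine M.closure_subset_closure ?_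
      (hC.mem_closure_sdiff_singleton_of_mem (M.mem_fundCircuit e I))
    rintro x ⟨hxC, hxe : x ≠ e⟩
    have hxI : x ∈ I := ((M.fundCircuit_subset_insert e I hxC).resolve_left hxe)
    have hind := (hI.mem_fundCircuit_iff hcl heI).mp hxC
    rw [← insert_sdiff_singleton_comm hxe.symm] at hind
    exact hX x hxI hind
  · left
    have hins : M.Indep (insert e I) := (hI.insert_indep_iff_of_notMem heI).mpr ⟨he, hcl⟩
    exact fun x hx ↦ hX x hx (hins.subset (insert_subset_insert sdiff_subset))

lemma exists_injective_mem_of_subset_or_mem_closure {V R : Finset α}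
    (hV : M.Indep (V : Set α)) (hcard : #V ≤ #R) (t : α → Finset α)
    (ht : ∀ v ∈ V, R ⊆ t v ∨ v ∈ M.closure (t v : Set α)) :
    ∃ f : V → α, Function.Injective f ∧ ∀ v, f v ∈ t v.1 := by
  classical
  refine (all_card_le_biUnion_card_iff_existsInjective' fun v : V ↦ t v).mp fun s ↦ ?_
  have hsV : #s ≤ #V := (card_le_univ s).trans_eq (Fintype.card_coe V)
  by_cases hR : ∃ v ∈ s, R ⊆ t v
  · obtain ⟨v, hvs, hRv⟩ := hR
    calc #s ≤ #R := hsV.trans hcard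
      _ ≤ _ := card_le_card (hRv.trans (subset_biUnion_of_mem (fun v : V ↦ t v) hvs))
  push Not at hR
  have hspan : (s.image Subtype.val : Set α) ⊆ M.closure (s.biUnion fun v : V ↦ t v) := by
    simp only [coe_image, Set.image_subset_iff]
    intro v hvs
    refine M.closure_subset_closure ?_ ((ht v v.2).resolve_left (hR v hvs))
    exact_mod_cast subset_biUnion_of_mem (fun v : V ↦ t v) hvs
  have hind : M.Indep (s.image Subtype.val : Set α) :=
    hV.subset (by rw [coe_image]; exact Set.image_subset_iff.mpr fun v _ ↦ v.2)
  have hle := hind.encard_le_encard_of_subset_closure_s6 hspan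
  rwa [encard_coe_eq_coe_finsetCard, encard_coe_eq_coe_finsetCard, Nat.cast_le,
    card_image_of_injective s Subtype.val_injective] at hle

lemma _root_.Finset.le_of_sum_insert_erase_le {β : Type*} [AddCommMonoid β] [PartialOrder β]
    [IsOrderedCancelAddMonoid β] [DecidableEq α] {R : Finset α} {v r : α}
    (w : α → β) (hv : v ∉ R) (hr : r ∈ R)
    (h : ∑ e ∈ insert v (R.erase r), w e ≤ ∑ e ∈ R, w e) : w v ≤ w r := by
  rw [sum_insert fun hvR ↦ hv (mem_of_mem_erase hvR), ← sum_erase_add R w hr, add_comm _ (w r)]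
    at h
  exact le_of_add_le_add_right h

lemma weight_le_of_insert_sdiff_indep {β : Type*} [AddCommMonoid β] [PartialOrder β]
    [IsOrderedCancelAddMonoid β] {V R : Finset α} (w : α → β)
    (hmax : ∀ R' : Finset α, (R' : Set α) ⊆ V ∪ R → M.Indep (R' : Set α) → #R' = #R →
      ∑ e ∈ R', w e ≤ ∑ e ∈ R, w e)
    {v r : α} (hvV : v ∈ V) (hvR : v ∉ R) (hr : r ∈ R)
    (hind : M.Indep (insert v ((R : Set α) \ {r}))) : w v ≤ w r := by
  classical
  have hcoe : ((insert v (R.erase r) : Finset α) : Set α) = insert v ((R : Set α) \ {r}) := by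
    rw [coe_insert, coe_erase]
  refine R.le_of_sum_insert_erase_le w hvR hr (hmax _ ?_ (hcoe ▸ hind) ?_)
  · rw [hcoe]
    exact insert_subset (.inl hvV) (sdiff_subset.trans subset_union_right)
  · rw [card_insert_of_notMem fun h ↦ hvR (mem_of_mem_erase h), card_erase_add_one hr]

end Matroid

theorem stmt6_general {α : Type*} (M : Matroid α) (w' : α → ℝ) (V R : Finset α)
    (hV : M.Indep (V : Set α)) (hR : M.Indep (R : Set α))
    (hcard : V.card = R.card)
    (hmax : ∀ R' : Finset α, (R' : Set α) ⊆ (V : Set α) ∪ (R : Set α) →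
      M.Indep (R' : Set α) → R'.card = R.card → ∑ e ∈ R', w' e ≤ ∑ e ∈ R, w' e) :
    ∃ φ : {x // x ∈ V} → {x // x ∈ R}, Function.Bijective φ ∧
      ∀ v : {x // x ∈ V},
        M.Indep (((R : Set α) \ {(φ v : α)}) ∪ {(v : α)}) ∧ w' (v : α) ≤ w' (φ v : α) := by
  classical
  set T : α → Finset α := fun v ↦
    R.filter fun r ↦ M.Indep (insert v ((R : Set α) \ {r})) ∧ w' v ≤ w' r
  have hT : ∀ v ∈ V, R ⊆ T v ∨ v ∈ M.closure (T v : Set α) := by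
    intro v hvV
    by_cases hvR : v ∈ R
    · refine .inr (M.mem_closure_of_mem' ?_ (hV.subset_ground hvV))
      simp [T, hvR, hR]
    · have hexch : ∀ r ∈ (R : Set α), M.Indep (insert v ((R : Set α) \ {r})) → r ∈ T v :=
        fun r hr hind ↦
          mem_filter.mpr ⟨hr, hind, M.weight_le_of_insert_sdiff_indep w' hmax hvV hvR hr hind⟩
      exact_mod_cast hR.subset_or_mem_closure_of_forall_insert_sdiff_indep
        (hV.subset_ground hvV) (by exact_mod_cast hvR) hexch
  obtain ⟨f, hf_inj, hfT⟩ := M.exists_injective_mem_of_subset_or_mem_closure hV hcard.le T hT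
  refine ⟨fun v ↦ ⟨f v, (mem_filter.mp (hfT v)).1⟩, ?_, fun v ↦ ?_⟩
  · refine (Fintype.bijective_iff_injective_and_card _).mpr ⟨?_, by simp [hcard]⟩
    exact fun a b hab ↦ hf_inj (congrArg Subtype.val hab)
  · rw [Set.union_singleton]
    exact (mem_filter.mp (hfT v)).2

/-- Weighted matroid exchange bijection: if `R` has maximum weight among all `|R|`-element
independent subsets of `V ∪ R`, the exchange bijection `φ : V → R` can be chosen so that
additionally `w'(φ v) ≥ w'(v)`. -/
theorem stmt6 {α : Type*} [DecidableEq α] (M : Matroid α) (w' : α → ℝ) (V R : Finset α)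
    (hV : M.Indep (V : Set α)) (hR : M.Indep (R : Set α))
    (hcard : V.card = R.card)
    (hmax : ∀ R' : Finset α, (R' : Set α) ⊆ (V : Set α) ∪ (R : Set α) →
      M.Indep (R' : Set α) → R'.card = R.card → ∑ e ∈ R', w' e ≤ ∑ e ∈ R, w' e) :
    ∃ φ : {x // x ∈ V} → {x // x ∈ R}, Function.Bijective φ ∧
      ∀ v : {x // x ∈ V},
        M.Indep (((R : Set α) \ {(φ v : α)}) ∪ {(v : α)}) ∧ w' (v : α) ≤ w' (φ v : α) :=
  stmt6_general M w' V R hV hR hcard hmax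
end

section
/- Let M be a matroid with weights w': U → ℝ_{≥0}, let B be the maximum-weight basis of M (chosen by the greedy algorithm), and for an independent set A let R(A) be the maximum-weight subset R of B such that A ∪ R is a basis of M. Then R(A) equals the maximum-weight basis of the contraction matroid M/A. -/
/-! If `R'` completes `A` to a basis and contains some `e ∉ B`, symmetric exchange gives `f ∈ B`
such that both `A ∪ R' - e + f` and `B - f + e` are bases. Maximality of `B` forces `w e ≤ w f`,
so the swap does not decrease the weight of `R'` and moves it closer to `B`. Iterating, `R'` is
outweighed by a completion of `A` inside `B`, hence by `R`. -/

open Set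

lemma finsum_mem_insert_sdiff_singleton_add {α β : Type*} [AddCommMonoid β] (w : α → β)
    {s : Set α} {a b : α} (hs : s.Finite) (ha : a ∉ s) (hb : b ∈ s) :
    ∑ᶠ x ∈ insert a s \ {b}, w x + w b = ∑ᶠ x ∈ s, w x + w a := by
  have h := finsum_mem_add_sdiff (f := w) (singleton_subset_iff.2 (mem_insert_of_mem a hb))
    (hs.insert a)
  rw [finsum_mem_singleton, finsum_mem_insert w ha hs] at h
  rw [add_comm, h, add_comm]

namespace Matroid

variable {α : Type*} {M : Matroid α} {B B₁ B₂ : Set α} {e f : α}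

lemma IsBase.isBase_insert_sdiff_of_mem_fundCircuit (hB : M.IsBase B) (heB : e ∉ B)
    (hfB : f ∈ B) (hf : f ∈ M.fundCircuit e B) (heE : e ∈ M.E := by aesop_mat) :
    M.IsBase (insert e B \ {f}) :=
  hB.exchange_isBase_of_indep' hfB heB <|
    (hB.indep.mem_fundCircuit_iff (by rwa [hB.closure_eq]) heB).1 hf

theorem IsBase.exists_symm_exchange (hB₁ : M.IsBase B₁) (hB₂ : M.IsBase B₂) (he : e ∈ B₁ \ B₂) :
    ∃ f ∈ B₂ \ B₁, M.IsBase (insert f B₁ \ {e}) ∧ M.IsBase (insert e B₂ \ {f}) := by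
  have heE : e ∈ M.E := hB₁.subset_ground he.1
  have hC := hB₂.fundCircuit_isCircuit heE he.2
  have hK := fundCocircuit_isCocircuit he.1 hB₁
  -- a circuit and a cocircuit never meet in exactly one element
  obtain ⟨f, ⟨hfC, hfK⟩, hfe⟩ := (hC.isCocircuit_inter_nontrivial hK
    ⟨e, M.mem_fundCircuit e B₂, M.mem_fundCocircuit e B₁⟩).exists_ne e
  have hfB₂ : f ∈ B₂ := (mem_insert_iff.1 (M.fundCircuit_subset_insert e B₂ hfC)).resolve_left hfe
  have hfB₁ : f ∉ B₁ :=
    fun hf ↦ hfe ((M.fundCocircuit_inter_eq he.1).subset ⟨hfK, hf⟩)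
  refine ⟨f, ⟨hfB₂, hfB₁⟩, ?_, hB₂.isBase_insert_sdiff_of_mem_fundCircuit he.2 hfB₂ hfC⟩
  exact hB₁.isBase_insert_sdiff_of_mem_fundCircuit hfB₁ he.1
    (hB₁.mem_fundCocircuit_iff_mem_fundCircuit.1 hfK) (hB₂.subset_ground hfB₂)

variable {β : Type*} [AddCommMonoid β] [PartialOrder β] [IsOrderedCancelAddMonoid β] [M.Finite]

lemma weight_le_of_insert_sdiff_isBase (w : α → β)
    (hBmax : ∀ B', M.IsBase B' → ∑ᶠ x ∈ B', w x ≤ ∑ᶠ x ∈ B, w x) (hB : M.IsBase B)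
    (heB : e ∉ B) (hfB : f ∈ B) (hbase : M.IsBase (insert e B \ {f})) : w e ≤ w f := by
  have hsum := finsum_mem_insert_sdiff_singleton_add w (M.set_finite B hB.subset_ground) heB hfB
  have h : ∑ᶠ x ∈ B, w x + w e ≤ ∑ᶠ x ∈ B, w x + w f := by
    rw [← hsum]
    gcongr
    exact hBmax _ hbase
  exact le_of_add_le_add_left h

theorem exists_subset_isBase_union_weight_le (w : α → β)
    (hBmax : ∀ B', M.IsBase B' → ∑ᶠ x ∈ B', w x ≤ ∑ᶠ x ∈ B, w x) (hB : M.IsBase B)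
    {A R : Set α} (hRA : Disjoint R A) (hAR : M.IsBase (A ∪ R)) :
    ∃ R' ⊆ B, Disjoint R' A ∧ M.IsBase (A ∪ R') ∧ ∑ᶠ x ∈ R, w x ≤ ∑ᶠ x ∈ R', w x := by
  have hRfin : R.Finite := M.set_finite R (subset_union_right.trans hAR.subset_ground)
  obtain ⟨n, hn⟩ : ∃ n, (R \ B).ncard = n := ⟨_, rfl⟩
  induction n generalizing R with
  | zero =>
    exact ⟨R, sdiff_eq_empty.1 ((ncard_eq_zero hRfin.sdiff).1 hn), hRA, hAR, le_rfl⟩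
  | succ n ih =>
    obtain ⟨e, heR, heB⟩ := nonempty_of_ncard_ne_zero (s := R \ B) (by omega)
    obtain ⟨f, ⟨hfB, hfAR⟩, hbase, hbase'⟩ := hAR.exists_symm_exchange hB ⟨Or.inr heR, heB⟩
    have hfR : f ∉ R := fun h ↦ hfAR (Or.inr h)
    have hAR' : A ∪ (insert f R \ {e}) = insert f (A ∪ R) \ {e} := by
      ext x; simp only [mem_union, mem_insert_iff, mem_sdiff, mem_singleton_iff]
      grind
    have hRA' : Disjoint (insert f R \ {e}) A :=
      (disjoint_insert_left.2 ⟨fun h ↦ hfAR (Or.inl h), hRA⟩).mono_left sdiff_subset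
    have hn' : ((insert f R \ {e}) \ B).ncard = n := by
      rw [sdiff_right_comm, insert_sdiff_of_mem _ hfB,
        ncard_sdiff_singleton_of_mem (show e ∈ R \ B from ⟨heR, heB⟩), hn, Nat.add_sub_cancel]
    obtain ⟨R', hR'B, hR'A, hAR'base, hle⟩ :=
      ih hRA' (hAR' ▸ hbase) ((hRfin.insert f).sdiff) hn'
    refine ⟨R', hR'B, hR'A, hAR'base, le_trans ?_ hle⟩
    have hwef := weight_le_of_insert_sdiff_isBase w hBmax hB heB hfB hbase'
    have hsum := finsum_mem_insert_sdiff_singleton_add w hRfin hfR heR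
    have h : ∑ᶠ x ∈ R, w x + w e ≤ ∑ᶠ x ∈ insert f R \ {e}, w x + w e := by
      rw [hsum]
      gcongr
    exact le_of_add_le_add_right h

end Matroid

theorem stmt7_general {α : Type*} (M : Matroid α) [M.Finite] (w' : α → ℝ)
    (B : Set α) (hB : M.IsBase B)
    (hBmax : ∀ B', M.IsBase B' → ∑ᶠ e ∈ B', w' e ≤ ∑ᶠ e ∈ B, w' e)
    (A : Set α)
    (R : Set α)
    (hRmax : ∀ R', R' ⊆ B → Disjoint R' A → M.IsBase (A ∪ R') →
      ∑ᶠ e ∈ R', w' e ≤ ∑ᶠ e ∈ R, w' e) :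
    -- `R` is a basis of `M/A` of maximum weight among all bases of `M/A`
    ∀ R', Disjoint R' A → M.IsBase (A ∪ R') → ∑ᶠ e ∈ R', w' e ≤ ∑ᶠ e ∈ R, w' e := by
  intro R' hR'A hAR'
  obtain ⟨R'', hR''B, hR''A, hAR'', hle⟩ :=
    Matroid.exists_subset_isBase_union_weight_le w' hBmax hB hR'A hAR'
  exact hle.trans (hRmax R'' hR''B hR''A hAR'')

/-- Let `B` be the maximum-weight basis of a matroid with distinct nonnegative weights, `A` an
independent set, and `R ⊆ B` the maximum-weight subset of `B` completing `A` to a basis.  Then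
`R` is the maximum-weight basis of the contraction `M/A` (i.e. `R` is disjoint from `A`,
`A ∪ R` is a basis, and `R` has maximum weight among all such sets). -/
theorem stmt7 {α : Type*} (M : Matroid α) [M.Finite] (w' : α → ℝ)
    (hw'nonneg : ∀ e, 0 ≤ w' e) (hw'inj : Function.Injective w')
    (B : Set α) (hB : M.IsBase B)
    (hBmax : ∀ B', M.IsBase B' → ∑ᶠ e ∈ B', w' e ≤ ∑ᶠ e ∈ B, w' e)
    (A : Set α) (hA : M.Indep A)
    (R : Set α) (hRB : R ⊆ B) (hdisj : Disjoint R A) (hbase : M.IsBase (A ∪ R))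
    (hRmax : ∀ R', R' ⊆ B → Disjoint R' A → M.IsBase (A ∪ R') →
      ∑ᶠ e ∈ R', w' e ≤ ∑ᶠ e ∈ R, w' e) :
    -- `R` is a basis of `M/A` of maximum weight among all bases of `M/A`
    ∀ R', Disjoint R' A → M.IsBase (A ∪ R') → ∑ᶠ e ∈ R', w' e ≤ ∑ᶠ e ∈ R, w' e :=
  stmt7_general M w' B hB hBmax A R hRmax
end

section
/- In the setting of a monotone threshold online algorithm on independent random weights, where the accepted set is A = {x_i : w(x_i) ≥ T_i} and T_i is independent of w(x_i), we have E[Σ_{x_i ∈ A} (w(x_i) - T_i)^+] = E[Σ_{i=1}^n (w(x_i) - T_i)^+] ≥ E[Σ_{x_i ∈ R} (w'(x_i) - T_i)^+] for any random subset R of indices determined by w' and the T_i, where w' is an i.i.d. copy of w. -/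
open MeasureTheory ProbabilityTheory

/-- For a monotone threshold algorithm accepting `A = {i : w_i ≥ T_i}` with `T_i` independent of
`(w_i, w'_i)` and `w'` an i.i.d. copy of `w`:
`E[Σ_{i ∈ A}(w_i - T_i)^+] = E[Σ_i (w_i - T_i)^+] ≥ E[Σ_{i ∈ R}(w'_i - T_i)^+]`
for any random index set `R` determined by `w'` and the thresholds. -/
theorem stmt12 {Ω : Type*} [MeasurableSpace Ω] (μ : Measure Ω) [IsProbabilityMeasure μ]
    (n : ℕ) (W W' T : Fin n → Ω → ℝ)
    (hWmeas : ∀ i, Measurable (W i)) (hW'meas : ∀ i, Measurable (W' i))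
    (hTmeas : ∀ i, Measurable (T i))
    (hid : ∀ i, IdentDistrib (W i) (W' i) μ μ)
    (hWW' : ∀ i, IndepFun (W i) (W' i) μ)
    (hTind : ∀ i, IndepFun (fun ω => (W i ω, W' i ω)) (T i) μ)
    (A : Ω → Finset (Fin n)) (hA : ∀ ω i, i ∈ A ω ↔ T i ω ≤ W i ω)
    (R : Ω → Finset (Fin n))
    (hR : ∃ F : (Fin n → ℝ) → (Fin n → ℝ) → Finset (Fin n),
      ∀ ω, R ω = F (fun i => W' i ω) (fun i => T i ω))
    (hint : ∀ i, Integrable (fun ω => max (W i ω - T i ω) 0) μ)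
    (hint' : ∀ i, Integrable (fun ω => max (W' i ω - T i ω) 0) μ) :
    (∫ ω, ∑ i ∈ A ω, max (W i ω - T i ω) 0 ∂μ) =
        (∫ ω, ∑ i, max (W i ω - T i ω) 0 ∂μ) ∧
      (∫ ω, ∑ i ∈ R ω, max (W' i ω - T i ω) 0 ∂μ) ≤
        ∫ ω, ∑ i, max (W i ω - T i ω) 0 ∂μ := by
  -- per-index equality of expectations via identical distribution of pairs
  have key : ∀ i, ∫ ω, max (W' i ω - T i ω) 0 ∂μ = ∫ ω, max (W i ω - T i ω) 0 ∂μ := by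
    intro i
    have hWT : IndepFun (W i) (T i) μ :=
      (hTind i).comp measurable_fst measurable_id
    have hW'T : IndepFun (W' i) (T i) μ :=
      (hTind i).comp measurable_snd measurable_id
    have m1 := (indepFun_iff_map_prod_eq_prod_map_map (hWmeas i).aemeasurable
      (hTmeas i).aemeasurable).mp hWT
    have m2 := (indepFun_iff_map_prod_eq_prod_map_map (hW'meas i).aemeasurable
      (hTmeas i).aemeasurable).mp hW'T
    have hpair : IdentDistrib (fun ω => (W i ω, T i ω)) (fun ω => (W' i ω, T i ω)) μ μ :=
      ⟨((hWmeas i).prodMk (hTmeas i)).aemeasurable,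
       ((hW'meas i).prodMk (hTmeas i)).aemeasurable,
       by rw [m1, m2, (hid i).map_eq]⟩
    have hcomp : IdentDistrib (fun ω => max (W i ω - T i ω) 0)
        (fun ω => max (W' i ω - T i ω) 0) μ μ :=
      hpair.comp (u := fun p : ℝ × ℝ => max (p.1 - p.2) 0)
        ((measurable_fst.sub measurable_snd).max measurable_const)
    exact hcomp.integral_eq.symm
  constructor
  · -- sums over A coincide with the full sum pointwise
    refine integral_congr_ae (Filter.Eventually.of_forall fun ω => ?_)
    refine Finset.sum_subset (Finset.subset_univ _) fun i _ hi => ?_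
    have : ¬ T i ω ≤ W i ω := fun h => hi ((hA ω i).mpr h)
    exact max_eq_right (by linarith [lt_of_not_ge this])
  · -- bound sum over R by full W' sum, then swap integrals per index
    have hint'sum : Integrable (fun ω => ∑ i, max (W' i ω - T i ω) 0) μ :=
      integrable_finset_sum _ fun i _ => hint' i
    have h1 : (∫ ω, ∑ i ∈ R ω, max (W' i ω - T i ω) 0 ∂μ) ≤
        ∫ ω, ∑ i, max (W' i ω - T i ω) 0 ∂μ := by
      refine integral_mono_of_nonneg (Filter.Eventually.of_forall fun ω => ?_) hint'sum
        (Filter.Eventually.of_forall fun ω => ?_)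
      · exact Finset.sum_nonneg fun i _ => le_max_right _ _
      · exact Finset.sum_le_sum_of_subset_of_nonneg (Finset.subset_univ _)
          fun i _ _ => le_max_right _ _
    have h2 : (∫ ω, ∑ i, max (W' i ω - T i ω) 0 ∂μ) =
        ∫ ω, ∑ i, max (W i ω - T i ω) 0 ∂μ := by
      rw [integral_finset_sum _ fun i _ => hint' i, integral_finset_sum _ fun i _ => hint i]
      exact Finset.sum_congr rfl fun i _ => key i
    linarith
end

section
/- Let q be a prime and consider the feasibility constraint 𝓘 on U = {(i,j) : 0 ≤ i ≤ q^q - 1, 0 ≤ j ≤ q-1} consisting of sets whose elements share a common first coordinate. Assign each element independent weight 1 with probability 1/q and 0 otherwise. Then the expected maximum weight of a feasible set is at least (1 - 1/e)·q, while every online algorithm (observing elements in any fixed order, accepting elements immediately subject to feasibility) has expected payoff less than 2. -/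
/-!
Read the weights as a random 0/1 pattern `x`, which has mass
`∏ i, p ^ x i * (1 - p) ^ (1 - x i)`; both bounds then become finite computations. The prophet
earns `q` as soon as some row is all ones, which fails with probability
`(1 - q ^ (-q)) ^ (q ^ q) ≤ 1/e`. An online algorithm's payoff is charged to its first accepted
element `k`: feasibility confines all later acceptances to the at most `q - 1` later elements of
the same row, and since the event "`k` is accepted first" only depends on the weights presented
up to `k`, each of those later weights is independent of it and contributes `1/q` in expectation.
The expected payoff is therefore at most `1 + (q - 1)/q < 2`.
-/

open MeasureTheory ProbabilityTheory Finset

noncomputable section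

variable {ι : Type*} [Fintype ι]

def toZeroOne (x : ι → Bool) : ι → ℝ := fun i => if x i then 1 else 0

def bernoulliMass (p : ℝ) (x : ι → Bool) : ℝ := ∏ i, if x i then p else 1 - p

omit [Fintype ι] in
theorem toZeroOne_nonneg (x : ι → Bool) (i : ι) : 0 ≤ toZeroOne x i := by
  unfold toZeroOne; split <;> norm_num

omit [Fintype ι] in
theorem toZeroOne_le_one (x : ι → Bool) (i : ι) : toZeroOne x i ≤ 1 := by
  unfold toZeroOne; split <;> norm_num

theorem bernoulliMass_nonneg {p : ℝ} (hp₀ : 0 ≤ p) (hp₁ : p ≤ 1) (x : ι → Bool) :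
    0 ≤ bernoulliMass p x :=
  prod_nonneg fun i _ => by split <;> linarith

variable [DecidableEq ι]

theorem sum_bernoulliMass (p : ℝ) : ∑ x : ι → Bool, bernoulliMass p x = 1 := by
  unfold bernoulliMass
  rw [← Fintype.prod_sum fun (_ : ι) (b : Bool) => if b then p else 1 - p]
  simp

theorem sum_bernoulliMass_mul_toZeroOne (p : ℝ) (e : ι)
    (g : (ι → Bool) → ℝ) (hg : ∀ x b, g (Function.update x e b) = g x) :
    ∑ x, bernoulliMass p x * g x * toZeroOne x e = p * ∑ x, bernoulliMass p x * g x := by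
  let σ := (Equiv.piSplitAt e fun _ => Bool).symm
  have hmass : ∀ b y, bernoulliMass p (σ (b, y)) =
      (if b then p else 1 - p) * ∏ j : {j // j ≠ e}, if y j then p else 1 - p := by
    intro b y
    rw [bernoulliMass, Fintype.prod_eq_mul_prod_subtype_ne _ e]
    congr 1
    · simp [σ]
    · exact prod_congr rfl fun j _ => by simp [σ, Equiv.piSplitAt_symm_apply, j.2]
  have hg' : ∀ b y, g (σ (b, y)) = g (σ (true, y)) := by
    intro b y
    rw [← hg (σ (true, y)) b]
    congr 1
    funext j
    by_cases hj : j = e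
    · subst hj; simp [σ]
    · simp [σ, hj]
  rw [← σ.sum_comp, ← σ.sum_comp, Fintype.sum_prod_type, Fintype.sum_prod_type, mul_sum]
  simp only [Fintype.sum_bool, hmass, hg']
  simp only [toZeroOne, σ, Equiv.piSplitAt_symm_apply, ↓reduceDIte, ↓reduceIte, mul_one,
    Bool.false_eq_true, mul_zero, sum_const_zero, add_zero]
  simp only [mul_assoc, ← mul_sum]
  ring

theorem sum_bernoulliMass_mul_noFullRow {κ τ : Type*} [Fintype κ] [Fintype τ] [DecidableEq κ]
    [DecidableEq τ] (p : ℝ) :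
    ∑ x : κ × τ → Bool, bernoulliMass p x * ∏ i, (if ∀ j, x (i, j) then 0 else 1)
      = (1 - p ^ Fintype.card τ) ^ Fintype.card κ := by
  have hrow : ∑ z : τ → Bool, bernoulliMass p z * (if ∀ j, z j then 0 else 1)
      = 1 - p ^ Fintype.card τ := by
    have h : ∀ z : τ → Bool, (if ∀ j, z j then (0 : ℝ) else 1)
        = 1 - if z = fun _ => true then 1 else 0 := by
      intro z; simp only [funext_iff]; split_ifs <;> norm_num
    simp only [h, mul_sub, mul_one, mul_ite, mul_zero, sum_sub_distrib, Fintype.sum_ite_eq',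
      sum_bernoulliMass]
    simp [bernoulliMass]
  have hfactor : ∀ y : κ → τ → Bool, bernoulliMass p (Function.uncurry y)
      = ∏ i, bernoulliMass p (y i) := fun y => Fintype.prod_prod_type _
  rw [← (Equiv.curry κ τ Bool).symm.sum_comp, ← hrow, ← Finset.card_univ, ← prod_const,
    Fintype.prod_sum]
  refine sum_congr rfl fun y _ => ?_
  rw [prod_mul_distrib, ← hfactor]
  rfl

theorem integral_eq_sum_bernoulliMass {Ω : Type*} [MeasurableSpace Ω] {μ : Measure Ω}
    [IsProbabilityMeasure μ] {W : ι → Ω → ℝ} {p : ℝ} (hmeas : ∀ i, Measurable (W i))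
    (hindep : iIndepFun W μ) (hW : ∀ i ω, W i ω = 0 ∨ W i ω = 1)
    (hp : ∀ i, μ.real {ω | W i ω = 1} = p) (f : (ι → ℝ) → ℝ) :
    ∫ ω, f (fun i => W i ω) ∂μ = ∑ x, bernoulliMass p x * f (toZeroOne x) := by
  let X : Ω → ι → Bool := fun ω i => decide (W i ω = 1)
  have hdec : Measurable fun r : ℝ => decide (r = 1) := by
    refine measurable_to_bool ?_
    convert measurableSet_singleton (1 : ℝ)
    ext; simp
  have hXmeas : ∀ i, Measurable fun ω => X ω i := fun i => hdec.comp (hmeas i)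
  have hWX : ∀ ω, (fun i => W i ω) = toZeroOne (X ω) := by
    intro ω; funext i; rcases hW i ω with h | h <;> simp [X, toZeroOne, h]
  have hlaw : μ.map X = Measure.pi fun i => μ.map fun ω => X ω i :=
    (iIndepFun_iff_map_fun_eq_pi_map fun i => (hXmeas i).aemeasurable).1
      (hindep.comp _ fun _ => hdec)
  have hcoord : ∀ i b, (μ.map fun ω => X ω i).real {b} = if b then p else 1 - p := by
    intro i b
    have hone : (fun ω => X ω i) ⁻¹' {true} = {ω | W i ω = 1} := by ext; simp [X]
    have hzero : (fun ω => X ω i) ⁻¹' {false} = {ω | W i ω = 1}ᶜ := by ext; simp [X]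
    rw [map_measureReal_apply (hXmeas i) (measurableSet_singleton b)]
    cases b
    · rw [hzero, probReal_compl_eq_one_sub (measurableSet_eq_fun (hmeas i) measurable_const), hp i]
      rfl
    · rw [hone, hp i]
      rfl
  simp_rw [hWX]
  rw [← integral_map (φ := X) (f := fun x => f (toZeroOne x))
    (measurable_pi_lambda _ hXmeas).aemeasurable Measurable.of_discrete.aestronglyMeasurable, hlaw,
    integral_fintype .of_finite]
  refine sum_congr rfl fun x _ => ?_
  rw [smul_eq_mul, measureReal_def, Measure.pi_singleton, ENNReal.toReal_prod]
  simp_rw [← measureReal_def, hcoord]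
  rfl

end

section Online

variable {ι : Type*} {N : ℕ} (ord : Fin N ≃ ι) (A : (ι → ℝ) → Set ι)

def IsOnline : Prop :=
  ∀ (v₁ v₂ : ι → ℝ) (k : Fin N),
    (∀ m, m ≤ k → v₁ (ord m) = v₂ (ord m)) → (ord k ∈ A v₁ ↔ ord k ∈ A v₂)

def IsFirstAccepted (v : ι → ℝ) (k : Fin N) : Prop :=
  ord k ∈ A v ∧ ∀ m < k, ord m ∉ A v

variable {ord A}

theorem IsFirstAccepted.unique {v : ι → ℝ} {k k' : Fin N} (h : IsFirstAccepted ord A v k)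
    (h' : IsFirstAccepted ord A v k') : k = k' := by
  by_contra hne
  rcases lt_or_gt_of_ne hne with hlt | hlt
  · exact h'.2 k hlt h.1
  · exact h.2 k' hlt h'.1

theorem exists_isFirstAccepted {v : ι → ℝ} (h : (A v).Nonempty) :
    ∃ k, IsFirstAccepted ord A v k := by
  classical
  obtain ⟨e, he⟩ := h
  obtain ⟨k, hk, hmin⟩ := (univ.filter fun m => ord m ∈ A v).exists_min_image id
    ⟨ord.symm e, by simpa using he⟩
  refine ⟨k, (mem_filter.1 hk).2, fun m hm hmA => ?_⟩
  exact absurd (hmin m (by simpa using hmA)) (not_le.2 hm)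

theorem IsOnline.isFirstAccepted_congr (hA : IsOnline ord A) {v₁ v₂ : ι → ℝ} {k : Fin N}
    (h : ∀ m ≤ k, v₁ (ord m) = v₂ (ord m)) :
    IsFirstAccepted ord A v₁ k ↔ IsFirstAccepted ord A v₂ k := by
  have hm : ∀ m ≤ k, ord m ∈ A v₁ ↔ ord m ∈ A v₂ :=
    fun m hmk => hA v₁ v₂ m fun m' hm' => h m' (hm'.trans hmk)
  unfold IsFirstAccepted
  rw [hm k le_rfl]
  exact and_congr_right fun _ => forall₂_congr fun m (hmk : m < k) => not_congr (hm m hmk.le)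

open Classical in
theorem sum_sum_bernoulliMass_isFirstAccepted_le_one [Fintype ι] [DecidableEq ι] {p : ℝ}
    (hp₀ : 0 ≤ p) (hp₁ : p ≤ 1) :
    ∑ k, ∑ x, bernoulliMass p x * (if IsFirstAccepted ord A (toZeroOne x) k then 1 else 0)
      ≤ 1 := by
  have hcount : ∀ v, ∑ k, (if IsFirstAccepted ord A v k then (1 : ℝ) else 0) ≤ 1 := by
    intro v
    rw [sum_boole, Nat.cast_le_one]
    exact card_le_one.2 fun k hk k' hk' => (mem_filter.1 hk).2.unique (mem_filter.1 hk').2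
  rw [sum_comm]
  calc ∑ x, ∑ k, bernoulliMass p x * (if IsFirstAccepted ord A (toZeroOne x) k then 1 else 0)
      = ∑ x, bernoulliMass p x * ∑ k, (if IsFirstAccepted ord A (toZeroOne x) k then 1 else 0) :=
        sum_congr rfl fun x _ => (mul_sum _ _ _).symm
    _ ≤ ∑ x, bernoulliMass p x * 1 :=
        sum_le_sum fun x _ => mul_le_mul_of_nonneg_left (hcount _) (bernoulliMass_nonneg hp₀ hp₁ x)
    _ = 1 := by simp_rw [mul_one]; exact sum_bernoulliMass p

end Online

section Rows

open Classical

variable {N : ℕ} {κ τ : Type*} [Fintype τ] [DecidableEq κ] [DecidableEq τ]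
  {ord : Fin N ≃ κ × τ} {A : (κ × τ → ℝ) → Set (κ × τ)}

variable (ord) in
def laterInRow (k : Fin N) : Finset (Fin N) :=
  univ.filter fun m => k < m ∧ (ord m).1 = (ord k).1

theorem card_laterInRow_add_one_le (k : Fin N) :
    (laterInRow ord k).card + 1 ≤ Fintype.card τ := by
  have hinj : Set.InjOn (fun m => (ord m).2) (laterInRow ord k) := by
    intro a ha b hb hab
    simp only [laterInRow, mem_coe, mem_filter, mem_univ, true_and] at ha hb
    exact ord.injective (Prod.ext (ha.2.trans hb.2.symm) hab)
  have hmaps : ∀ m ∈ laterInRow ord k, (ord m).2 ∈ univ.erase (ord k).2 := by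
    intro m hm
    simp only [laterInRow, mem_filter, mem_univ, true_and] at hm
    exact mem_erase.2 ⟨fun h => hm.1.ne' (ord.injective (Prod.ext hm.2 h)), mem_univ _⟩
  have hcard := card_le_card_of_injOn _ hmaps hinj
  rw [card_erase_of_mem (mem_univ _), card_univ] at hcard
  have hτ : 0 < Fintype.card τ := Fintype.card_pos_iff.2 ⟨(ord k).2⟩
  omega

variable [Fintype κ]

theorem finsum_accepted_le (hfeas : ∀ v, ∀ a ∈ A v, ∀ b ∈ A v, a.1 = b.1) {v : κ × τ → ℝ}
    (hv₀ : ∀ e, 0 ≤ v e) (hv₁ : ∀ e, v e ≤ 1) {k : Fin N} (hk : IsFirstAccepted ord A v k) :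
    ∑ᶠ e ∈ A v, v e ≤ 1 + ∑ m ∈ laterInRow ord k, v (ord m) := by
  have hsub : (Set.toFinite (A v)).toFinset ⊆
      insert (ord k) ((laterInRow ord k).map ord.toEmbedding) := by
    intro e he
    rw [Set.Finite.mem_toFinset] at he
    obtain ⟨m, rfl⟩ := ord.surjective e
    rcases lt_trichotomy m k with hmk | rfl | hkm
    · exact absurd he (hk.2 m hmk)
    · exact mem_insert_self _ _
    · refine mem_insert_of_mem (mem_map_of_mem _ ?_)
      simp only [laterInRow, mem_filter, mem_univ, true_and]
      exact ⟨hkm, hfeas v _ he _ hk.1⟩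
  have hk_notMem : ord k ∉ (laterInRow ord k).map ord.toEmbedding := by
    simp [laterInRow]
  rw [finsum_mem_eq_finite_toFinset_sum _ (Set.toFinite (A v))]
  calc ∑ e ∈ (Set.toFinite (A v)).toFinset, v e
      ≤ ∑ e ∈ insert (ord k) ((laterInRow ord k).map ord.toEmbedding), v e :=
        sum_le_sum_of_subset_of_nonneg hsub fun e _ _ => hv₀ e
    _ = v (ord k) + ∑ m ∈ laterInRow ord k, v (ord m) := by
        rw [sum_insert hk_notMem, sum_map]; rfl
    _ ≤ 1 + ∑ m ∈ laterInRow ord k, v (ord m) := by linarith [hv₁ (ord k)]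

theorem finsum_accepted_le_sum_isFirstAccepted
    (hfeas : ∀ v, ∀ a ∈ A v, ∀ b ∈ A v, a.1 = b.1) {v : κ × τ → ℝ}
    (hv₀ : ∀ e, 0 ≤ v e) (hv₁ : ∀ e, v e ≤ 1) :
    ∑ᶠ e ∈ A v, v e ≤ ∑ k, if IsFirstAccepted ord A v k then
      1 + ∑ m ∈ laterInRow ord k, v (ord m) else 0 := by
  rcases (A v).eq_empty_or_nonempty with hA | hA
  · rw [hA, finsum_mem_empty]
    refine sum_nonneg fun k _ => ?_
    split_ifs
    · exact add_nonneg zero_le_one (sum_nonneg fun m _ => hv₀ _)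
    · exact le_rfl
  · obtain ⟨k, hk⟩ := exists_isFirstAccepted (ord := ord) hA
    rw [Fintype.sum_eq_single k fun k' hk' => if_neg fun h => hk' (h.unique hk), if_pos hk]
    exact finsum_accepted_le hfeas hv₀ hv₁ hk

theorem sum_bernoulliMass_isFirstAccepted_mul (hA : IsOnline ord A) (p : ℝ) (k : Fin N) :
    ∑ x, bernoulliMass p x * (if IsFirstAccepted ord A (toZeroOne x) k then
        1 + ∑ m ∈ laterInRow ord k, toZeroOne x (ord m) else 0)
      = (1 + (laterInRow ord k).card * p) *
          ∑ x, bernoulliMass p x * (if IsFirstAccepted ord A (toZeroOne x) k then 1 else 0) := by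
  set g : (κ × τ → Bool) → ℝ := fun x => if IsFirstAccepted ord A (toZeroOne x) k then 1 else 0
  -- being accepted first at `k` is decided by the weights at positions `≤ k`
  have hg : ∀ m ∈ laterInRow ord k, ∀ x b, g (Function.update x (ord m) b) = g x := by
    intro m hm x b
    have hkm : k < m := (mem_filter.1 hm).2.1
    refine if_congr (hA.isFirstAccepted_congr fun m' hm' => ?_) rfl rfl
    have hne : ord m' ≠ ord m := ord.injective.ne (hm'.trans_lt hkm).ne
    simp [toZeroOne, Function.update_of_ne hne]
  have hsplit : ∀ x, bernoulliMass p x * (if IsFirstAccepted ord A (toZeroOne x) k then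
      1 + ∑ m ∈ laterInRow ord k, toZeroOne x (ord m) else 0)
      = bernoulliMass p x * g x +
          ∑ m ∈ laterInRow ord k, bernoulliMass p x * g x * toZeroOne x (ord m) := by
    intro x
    simp only [g]
    split_ifs <;> simp [mul_add, mul_sum]
  rw [sum_congr rfl fun x _ => hsplit x, sum_add_distrib, sum_comm,
    sum_congr rfl fun m hm => sum_bernoulliMass_mul_toZeroOne p (ord m) g (hg m hm)]
  simp only [sum_const, nsmul_eq_mul]
  ring

theorem sum_bernoulliMass_finsum_accepted_le (hA : IsOnline ord A)
    (hfeas : ∀ v, ∀ a ∈ A v, ∀ b ∈ A v, a.1 = b.1) {p : ℝ} (hp₀ : 0 ≤ p) (hp₁ : p ≤ 1) :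
    ∑ x, bernoulliMass p x * ∑ᶠ e ∈ A (toZeroOne x), toZeroOne x e
      ≤ 1 + (Fintype.card τ - 1) * p := by
  set P : Fin N → ℝ := fun k =>
    ∑ x, bernoulliMass p x * (if IsFirstAccepted ord A (toZeroOne x) k then 1 else 0)
  have hP₀ : ∀ k, 0 ≤ P k := fun k => sum_nonneg fun x _ =>
    mul_nonneg (bernoulliMass_nonneg hp₀ hp₁ x) (by split_ifs <;> norm_num)
  have hlater : ∀ k, 1 + (laterInRow ord k).card * p ≤ 1 + (Fintype.card τ - 1) * p := by
    intro k
    have : ((laterInRow ord k).card : ℝ) + 1 ≤ Fintype.card τ := by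
      exact_mod_cast card_laterInRow_add_one_le k
    nlinarith
  have hc : 0 ≤ 1 + (Fintype.card τ - 1) * p := by
    nlinarith [(Nat.cast_nonneg (Fintype.card τ) : (0 : ℝ) ≤ _)]
  calc ∑ x, bernoulliMass p x * ∑ᶠ e ∈ A (toZeroOne x), toZeroOne x e
      ≤ ∑ x, bernoulliMass p x * ∑ k, (if IsFirstAccepted ord A (toZeroOne x) k then
          1 + ∑ m ∈ laterInRow ord k, toZeroOne x (ord m) else 0) :=
        sum_le_sum fun x _ => mul_le_mul_of_nonneg_left
          (finsum_accepted_le_sum_isFirstAccepted hfeas (toZeroOne_nonneg x) (toZeroOne_le_one x))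
          (bernoulliMass_nonneg hp₀ hp₁ x)
    _ = ∑ k, (1 + (laterInRow ord k).card * p) * P k := by
        simp_rw [mul_sum]
        rw [sum_comm]
        exact sum_congr rfl fun k _ => sum_bernoulliMass_isFirstAccepted_mul hA p k
    _ ≤ ∑ k, (1 + (Fintype.card τ - 1) * p) * P k :=
        sum_le_sum fun k _ => mul_le_mul_of_nonneg_right (hlater k) (hP₀ k)
    _ ≤ 1 + (Fintype.card τ - 1) * p := by
        rw [← mul_sum]
        exact mul_le_of_le_one_right hc (sum_sum_bernoulliMass_isFirstAccepted_le_one hp₀ hp₁)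

end Rows

section Prophet

variable {κ τ : Type*} [Fintype κ] [Fintype τ] [Nonempty κ]

def maxRowSum (v : κ × τ → ℝ) : ℝ := univ.sup' univ_nonempty fun i => ∑ j, v (i, j)

theorem card_mul_one_sub_le_maxRowSum (x : κ × τ → Bool) :
    (Fintype.card τ : ℝ) * (1 - ∏ i, if ∀ j, x (i, j) then 0 else 1)
      ≤ maxRowSum (toZeroOne x) := by
  by_cases hfull : ∃ i, ∀ j, x (i, j)
  · obtain ⟨i, hi⟩ := hfull
    rw [prod_eq_zero (mem_univ i) (if_pos hi : (if ∀ j, x (i, j) then (0 : ℝ) else 1) = 0), sub_zero,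
      mul_one]
    calc (Fintype.card τ : ℝ) = ∑ j, toZeroOne x (i, j) := by simp [toZeroOne, hi]
      _ ≤ maxRowSum (toZeroOne x) := le_sup' (fun i => ∑ j, toZeroOne x (i, j)) (mem_univ i)
  · rw [prod_eq_one fun i _ => if_neg fun hi => hfull ⟨i, hi⟩, sub_self, mul_zero]
    obtain ⟨i⟩ := ‹Nonempty κ›
    exact (sum_nonneg fun j _ => toZeroOne_nonneg x _).trans
      (le_sup' (fun i => ∑ j, toZeroOne x (i, j)) (mem_univ i))

theorem card_mul_one_sub_le_sum_bernoulliMass_maxRowSum [DecidableEq κ] [DecidableEq τ] {p : ℝ}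
    (hp₀ : 0 ≤ p) (hp₁ : p ≤ 1) :
    Fintype.card τ * (1 - (1 - p ^ Fintype.card τ) ^ Fintype.card κ)
      ≤ ∑ x : κ × τ → Bool, bernoulliMass p x * maxRowSum (toZeroOne x) := by
  calc (Fintype.card τ : ℝ) * (1 - (1 - p ^ Fintype.card τ) ^ Fintype.card κ)
      = ∑ x : κ × τ → Bool, bernoulliMass p x *
          (Fintype.card τ * (1 - ∏ i, (if ∀ j, x (i, j) then 0 else 1))) := by
        simp_rw [mul_left_comm _ (Fintype.card τ : ℝ), ← mul_sum, mul_sub, mul_one,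
          sum_sub_distrib, sum_bernoulliMass, sum_bernoulliMass_mul_noFullRow]
        ring
    _ ≤ ∑ x, bernoulliMass p x * maxRowSum (toZeroOne x) :=
        sum_le_sum fun x _ => mul_le_mul_of_nonneg_left (card_mul_one_sub_le_maxRowSum x)
          (bernoulliMass_nonneg hp₀ hp₁ x)

end Prophet

theorem stmt17_general (q : ℕ) [NeZero (q ^ q)]
    {Ω : Type*} [MeasurableSpace Ω] (μ : Measure Ω) [IsProbabilityMeasure μ]
    (W : Fin (q ^ q) × Fin q → Ω → ℝ)
    (hmeas : ∀ e, Measurable (W e))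
    (hindep : iIndepFun W μ)
    (hBernoulli : ∀ e ω, W e ω = 0 ∨ W e ω = 1)
    (hone : ∀ e, μ {ω | W e ω = 1} = ENNReal.ofReal (1 / q)) :
    -- the prophet's expected value is at least (1 - 1/e)·q
    ((1 - 1 / Real.exp 1) * q ≤
      ∫ ω, Finset.univ.sup' Finset.univ_nonempty
        (fun i : Fin (q ^ q) => ∑ j : Fin q, W (i, j) ω) ∂μ) ∧
    -- every online algorithm, for every fixed presentation order, earns less than 2
    (∀ (N : ℕ) (ord : Fin N ≃ (Fin (q ^ q) × Fin q))
        (A : ((Fin (q ^ q) × Fin q) → ℝ) → Set (Fin (q ^ q) × Fin q)),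
      -- online: the decision about the k-th presented element depends only on the
      -- weights of the elements presented so far
      (∀ (v₁ v₂ : (Fin (q ^ q) × Fin q) → ℝ) (k : Fin N),
        (∀ m, m ≤ k → v₁ (ord m) = v₂ (ord m)) → (ord k ∈ A v₁ ↔ ord k ∈ A v₂)) →
      -- feasibility: all accepted elements share the same first coordinate
      (∀ v, ∀ a ∈ A v, ∀ b ∈ A v, a.1 = b.1) →
      (∫ ω, ∑ᶠ e ∈ A (fun e => W e ω), W e ω ∂μ) < 2) := by
  have hp₀ : (0 : ℝ) ≤ 1 / q := by positivity
  have hp₁ : (1 : ℝ) / q ≤ 1 := by rw [one_div]; exact Nat.cast_inv_le_one q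
  have hp : ∀ e, μ.real {ω | W e ω = 1} = 1 / q := fun e => by
    rw [measureReal_def, hone e, ENNReal.toReal_ofReal hp₀]
  have hE := integral_eq_sum_bernoulliMass hmeas hindep hBernoulli hp
  refine ⟨?_, fun N ord A honline hfeas => ?_⟩
  · have hexp : (1 - (1 / (q : ℝ)) ^ q) ^ (q ^ q) ≤ 1 / Real.exp 1 := by
      have h := Real.one_sub_div_pow_le_exp_neg (n := q ^ q) (t := 1)
        (by exact_mod_cast NeZero.one_le)
      rwa [Real.exp_neg, ← one_div, Nat.cast_pow, ← one_div_pow] at h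
    have hprophet := card_mul_one_sub_le_sum_bernoulliMass_maxRowSum
      (κ := Fin (q ^ q)) (τ := Fin q) hp₀ hp₁
    simp only [Fintype.card_fin] at hprophet
    calc (1 - 1 / Real.exp 1) * q ≤ q * (1 - (1 - (1 / (q : ℝ)) ^ q) ^ (q ^ q)) := by
          nlinarith [(Nat.cast_nonneg q : (0 : ℝ) ≤ q)]
      _ ≤ _ := hprophet
      _ = _ := (hE maxRowSum).symm
  · rw [hE fun v => ∑ᶠ e ∈ A v, v e]
    calc _ ≤ 1 + ((q : ℝ) - 1) * (1 / q) := by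
          simpa using sum_bernoulliMass_finsum_accepted_le honline hfeas hp₀ hp₁
      _ < 2 := by
          rcases Nat.eq_zero_or_pos q with rfl | hq
          · norm_num
          · have : (0 : ℝ) < q := by exact_mod_cast hq
            rw [mul_one_div, sub_div, div_self this.ne']
            linarith [one_div_pos.2 this]

/-- Lower-bound instance for matroid intersections: on
`U = Fin (q^q) × Fin q` with i.i.d. Bernoulli(1/q) weights and feasible sets being those whose
elements share a common first coordinate, the prophet earns at least `(1 - 1/e)·q` in
expectation, while every online algorithm (for any fixed presentation order) earns less
than `2` in expectation. -/
theorem stmt17 (q : ℕ) (hq : q.Prime) [NeZero (q ^ q)]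
    {Ω : Type*} [MeasurableSpace Ω] (μ : Measure Ω) [IsProbabilityMeasure μ]
    (W : Fin (q ^ q) × Fin q → Ω → ℝ)
    (hmeas : ∀ e, Measurable (W e))
    (hindep : iIndepFun W μ)
    (hBernoulli : ∀ e ω, W e ω = 0 ∨ W e ω = 1)
    (hone : ∀ e, μ {ω | W e ω = 1} = ENNReal.ofReal (1 / q)) :
    -- the prophet's expected value is at least (1 - 1/e)·q
    ((1 - 1 / Real.exp 1) * q ≤
      ∫ ω, Finset.univ.sup' Finset.univ_nonempty
        (fun i : Fin (q ^ q) => ∑ j : Fin q, W (i, j) ω) ∂μ) ∧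
    -- every online algorithm, for every fixed presentation order, earns less than 2
    (∀ (N : ℕ) (ord : Fin N ≃ (Fin (q ^ q) × Fin q))
        (A : ((Fin (q ^ q) × Fin q) → ℝ) → Set (Fin (q ^ q) × Fin q)),
      -- online: the decision about the k-th presented element depends only on the
      -- weights of the elements presented so far
      (∀ (v₁ v₂ : (Fin (q ^ q) × Fin q) → ℝ) (k : Fin N),
        (∀ m, m ≤ k → v₁ (ord m) = v₂ (ord m)) → (ord k ∈ A v₁ ↔ ord k ∈ A v₂)) →
      -- feasibility: all accepted elements share the same first coordinate
      (∀ v, ∀ a ∈ A v, ∀ b ∈ A v, a.1 = b.1) →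
      (∫ ω, ∑ᶠ e ∈ A (fun e => W e ω), W e ω ∂μ) < 2) :=
  stmt17_general q μ W hmeas hindep hBernoulli hone
end
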